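/- Let τ > 0, θ ∈ ℝ, and let v : ℝ → ℂ be continuously differentiable on [−τ, τ]. Then |θ ∫_{−τ}^{τ} e^{i(τ−s)θ} v(s) ds| ≤ 4 sup_{s ∈ [−τ,τ]} |v(s)| + 2τ sup_{s ∈ [−τ,τ]} |v'(s)|. -/

import Mathlib

/-!
Since `∂ₛ e^{i(c−s)θ} = −iθ e^{i(c−s)θ}`, one integration by parts trades the factor `θ` for
the boundary terms `e^{i(c−s)θ} v(s)` at the two endpoints and the integral of
`e^{i(c−s)θ} v'(s)`. The exponential has modulus one, so the former are bounded by `sup |v|`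
each and the latter by `2τ sup |v'|`.
-/

open Complex Set intervalIntegral MeasureTheory

section SupNorm

variable {X E : Type*} [TopologicalSpace X] [SeminormedAddGroup E] {K : Set X} {f : X → E}

theorem IsCompact.bddAbove_range_norm (hK : IsCompact K) (hf : ContinuousOn f K) :
    BddAbove (range fun x : K => ‖f x‖) := by
  rw [← image_eq_range (fun x => ‖f x‖)]
  exact hK.bddAbove_image hf.norm

theorem IsCompact.norm_le_iSup_norm (hK : IsCompact K) (hf : ContinuousOn f K) {x : X}
    (hx : x ∈ K) : ‖f x‖ ≤ ⨆ y : K, ‖f y‖ :=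
  le_ciSup (hK.bddAbove_range_norm hf) ⟨x, hx⟩

end SupNorm

section OscillatoryIntegral

theorem norm_exp_I_mul_sub_mul (c θ s : ℝ) : ‖exp (I * ((c : ℂ) - s) * θ)‖ = 1 := by
  rw [mul_assoc, ← ofReal_sub, ← ofReal_mul, norm_exp_I_mul_ofReal]

theorem hasDerivAt_exp_I_mul_sub_mul (c θ s : ℝ) :
    HasDerivAt (fun s : ℝ => exp (I * ((c : ℂ) - s) * θ))
      (-I * θ * exp (I * ((c : ℂ) - s) * θ)) s := by
  have hphase : HasDerivAt (fun s : ℝ => I * ((c : ℂ) - s) * θ) (-I * θ) s := by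
    simpa using (((hasDerivAt_const s (c : ℂ)).sub (hasDerivAt_id s).ofReal_comp).const_mul
      I).mul_const (θ : ℂ)
  simpa [mul_comm] using hphase.cexp

variable {a b c θ : ℝ} {v v' : ℝ → ℂ}

theorem mul_integral_exp_I_mul_sub_mul_eq
    (hderiv : ∀ s ∈ uIcc a b, HasDerivWithinAt v (v' s) (uIcc a b) s)
    (hcont : ContinuousOn v' (uIcc a b)) :
    (θ : ℂ) * ∫ s in a..b, exp (I * ((c : ℂ) - s) * θ) * v s
      = I * (exp (I * ((c : ℂ) - b) * θ) * v b - exp (I * ((c : ℂ) - a) * θ) * v a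
          - ∫ s in a..b, exp (I * ((c : ℂ) - s) * θ) * v' s) := by
  have he : Continuous fun s : ℝ => exp (I * ((c : ℂ) - s) * θ) := by fun_prop
  have hv : ContinuousOn v (uIcc a b) := fun s hs => (hderiv s hs).continuousWithinAt
  have hibp := integral_deriv_mul_eq_sub_of_hasDerivWithinAt
    (fun s _ => (hasDerivAt_exp_I_mul_sub_mul c θ s).hasDerivWithinAt) hderiv
    ((he.const_smul (-I * θ)).intervalIntegrable a b) hcont.intervalIntegrable
  have hint : IntervalIntegrable (fun s : ℝ => -I * θ * exp (I * ((c : ℂ) - s) * θ) * v s)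
      volume a b :=
    ((continuous_const.mul he).continuousOn.mul hv).intervalIntegrable
  have hint' : IntervalIntegrable (fun s : ℝ => exp (I * ((c : ℂ) - s) * θ) * v' s)
      volume a b := (he.continuousOn.mul hcont).intervalIntegrable
  have hpull : ∫ s in a..b, -I * θ * exp (I * ((c : ℂ) - s) * θ) * v s
      = -I * θ * ∫ s in a..b, exp (I * ((c : ℂ) - s) * θ) * v s := by
    rw [← intervalIntegral.integral_const_mul]
    simp only [mul_assoc]
  rw [integral_add hint hint', hpull] at hibp
  linear_combination I * hibp
    + (θ : ℂ) * (∫ s in a..b, exp (I * ((c : ℂ) - s) * θ) * v s) * I_sq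

theorem norm_mul_integral_exp_I_mul_sub_mul_le {M M' : ℝ}
    (hderiv : ∀ s ∈ uIcc a b, HasDerivWithinAt v (v' s) (uIcc a b) s)
    (hcont : ContinuousOn v' (uIcc a b))
    (hv : ∀ s ∈ uIcc a b, ‖v s‖ ≤ M) (hv' : ∀ s ∈ uIcc a b, ‖v' s‖ ≤ M') :
    ‖(θ : ℂ) * ∫ s in a..b, exp (I * ((c : ℂ) - s) * θ) * v s‖ ≤ 2 * M + M' * |b - a| := by
  have hboundary (s : ℝ) (hs : s ∈ uIcc a b) : ‖exp (I * ((c : ℂ) - s) * θ) * v s‖ ≤ M := by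
    rw [norm_mul, norm_exp_I_mul_sub_mul, one_mul]
    exact hv s hs
  have hbulk : ‖∫ s in a..b, exp (I * ((c : ℂ) - s) * θ) * v' s‖ ≤ M' * |b - a| :=
    norm_integral_le_of_norm_le_const fun s hs => by
      rw [norm_mul, norm_exp_I_mul_sub_mul, one_mul]
      exact hv' s (uIoc_subset_uIcc hs)
  rw [mul_integral_exp_I_mul_sub_mul_eq hderiv hcont, norm_mul, norm_I, one_mul]
  calc _ ≤ ‖exp (I * ((c : ℂ) - b) * θ) * v b‖ + ‖exp (I * ((c : ℂ) - a) * θ) * v a‖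
          + ‖∫ s in a..b, exp (I * ((c : ℂ) - s) * θ) * v' s‖ :=
        (norm_sub_le _ _).trans (by gcongr; exact norm_sub_le _ _)
    _ ≤ M + M + M' * |b - a| := by
        gcongr
        exacts [hboundary b right_mem_uIcc, hboundary a left_mem_uIcc]
    _ = 2 * M + M' * |b - a| := by ring

end OscillatoryIntegral

/-- Single-Fourier-mode form of the `H²`-bound on the symmetric Duhamel integral
`u₂ = −i∫_{−τ}^{τ} e^{i(τ−s)Δ} v(s) ds` (inequality (3.25) of the paper):
`|θ ∫_{−τ}^{τ} e^{i(τ−s)θ} v(s) ds| ≤ 4 sup |v| + 2τ sup |v'|`. -/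
theorem symmetric_duhamel_symbol_bound (τ θ : ℝ) (hτ : 0 < τ) (v v' : ℝ → ℂ)
    (hderiv : ∀ s ∈ Set.Icc (-τ) τ, HasDerivWithinAt v (v' s) (Set.Icc (-τ) τ) s)
    (hcont : ContinuousOn v' (Set.Icc (-τ) τ)) :
    ‖(θ : ℂ) *
        ∫ s in (-τ)..τ, Complex.exp (Complex.I * ((τ : ℂ) - (s : ℂ)) * (θ : ℂ)) * v s‖
      ≤ 4 * (⨆ s : Set.Icc (-τ) τ, ‖v s‖)
        + 2 * τ * (⨆ s : Set.Icc (-τ) τ, ‖v' s‖) := by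
  have hv : ContinuousOn v (Icc (-τ) τ) := fun s hs => (hderiv s hs).continuousWithinAt
  rw [← uIcc_of_le (by linarith : -τ ≤ τ)] at hderiv hcont hv ⊢
  have hsup_nonneg : 0 ≤ ⨆ s : uIcc (-τ) τ, ‖v s‖ :=
    (norm_nonneg _).trans (isCompact_uIcc.norm_le_iSup_norm hv right_mem_uIcc)
  calc _ ≤ 2 * (⨆ s : uIcc (-τ) τ, ‖v s‖) + (⨆ s : uIcc (-τ) τ, ‖v' s‖) * |τ - -τ| :=
        norm_mul_integral_exp_I_mul_sub_mul_le hderiv hcont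
          (fun _ hs => isCompact_uIcc.norm_le_iSup_norm hv hs)
          (fun _ hs => isCompact_uIcc.norm_le_iSup_norm hcont hs)
    _ ≤ _ := by
        rw [abs_of_pos (by linarith : 0 < τ - -τ)]
        nlinarith
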